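/- arXiv:1512.03469 — 8 statements merged into one kernel-verified Lean document; each statement's English description precedes it below -/
import Mathlib

section
/- Let V be a finite-dimensional real vector space with a nondegenerate symmetric bilinear form of neutral signature (n, n), and let P : V → V be an isometric involution. If there exists a linear isometry R : V → V with P R = −R P, then the restriction of the bilinear form to each eigenspace E¹ = ker(P − Id) and E⁻¹ = ker(P + Id) is nondegenerate and of neutral signature. -/
/-- A real bilinear form is *neutral* (signature `(n, n)`) if it admits an orthonormal-type
basis indexed by `Fin n ⊕ Fin n`, on which the form is diagonal with `n` entries `+1` and
`n` entries `-1`. -/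
def IsNeutral {V : Type*} [AddCommGroup V] [Module ℝ V]
    (B : LinearMap.BilinForm ℝ V) : Prop :=
  ∃ (n : ℕ) (b : Module.Basis (Fin n ⊕ Fin n) ℝ V),
    ∀ i j, B (b i) (b j) =
      if i = j then Sum.elim (fun _ => (1 : ℝ)) (fun _ => -1) i else 0

/-- The restriction of a bilinear form to a submodule. -/
def restrictForm {V : Type*} [AddCommGroup V] [Module ℝ V]
    (B : LinearMap.BilinForm ℝ V) (W : Submodule ℝ V) : LinearMap.BilinForm ℝ W :=
  B.compl₁₂ W.subtype W.subtype


/-!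
The eigenspaces `E₊ = ker (P - 1)` and `E₋ = ker (P + 1)` of the isometric involution `P` are
complementary and orthogonal, so the form is nondegenerate on each of them. Since `PR = -RP`,
the isometry `R` maps `E₊` into `E₋` and `E₋` into `E₊`. If `W ⊆ E₊` is positive definite, then so
is `W ⊕ R W ⊆ V`, of twice the dimension: twice the positive index (`sigPos`) of `E₊` is at most
the positive index `n` of `V`, and the same holds for `E₋` and for negative indices. As the four
indices add up to `dim V = 2n`, each of them is `n / 2`, so both restrictions are neutral.
-/

open QuadraticMap QuadraticForm Module

section Involution

variable {K M : Type*} [Field K] [AddCommGroup M] [Module K M] {P : M →ₗ[K] M}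

theorem mem_ker_sub_id_iff {x : M} : x ∈ LinearMap.ker (P - LinearMap.id) ↔ P x = x := by
  simp [sub_eq_zero]

theorem mem_ker_add_id_iff {x : M} : x ∈ LinearMap.ker (P + LinearMap.id) ↔ P x = -x := by
  simp [add_eq_zero_iff_eq_neg]

variable [NeZero (2 : K)]

theorem isCompl_ker_sub_id_ker_add_id (hP : P ∘ₗ P = LinearMap.id) :
    IsCompl (LinearMap.ker (P - LinearMap.id)) (LinearMap.ker (P + LinearMap.id)) := by
  have hPP x : P (P x) = x := LinearMap.congr_fun hP x
  refine ⟨Submodule.disjoint_def.2 fun x h₁ h₂ => ?_,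
    Submodule.codisjoint_iff_exists_add_eq.2 fun x => ?_⟩
  · rw [mem_ker_sub_id_iff] at h₁
    rw [mem_ker_add_id_iff, h₁, eq_neg_iff_add_eq_zero, ← two_smul K] at h₂
    exact (smul_eq_zero.1 h₂).resolve_left two_ne_zero
  · refine ⟨(2 : K)⁻¹ • (x + P x), (2 : K)⁻¹ • (x - P x), ?_, ?_, ?_⟩
    · simp [hPP, add_comm]
    · simp [hPP]
    · rw [← smul_add, add_add_sub_cancel, ← two_smul K, smul_smul, inv_mul_cancel₀ two_ne_zero,
        one_smul]

theorem apply_eq_zero_of_mem_ker_sub_id_of_mem_ker_add_id {B : LinearMap.BilinForm K M}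
    (hP : ∀ x y, B (P x) (P y) = B x y) :
    ∀ x ∈ LinearMap.ker (P - LinearMap.id), ∀ y ∈ LinearMap.ker (P + LinearMap.id), B x y = 0 := by
  intro x hx y hy
  have hxy := hP x y
  rw [mem_ker_sub_id_iff.1 hx, mem_ker_add_id_iff.1 hy, map_neg, neg_eq_iff_add_eq_zero,
    ← two_smul K] at hxy
  exact (smul_eq_zero.1 hxy).resolve_left two_ne_zero

end Involution

theorem LinearMap.BilinForm.toQuadraticMap_restrict {K V : Type*} [CommRing K] [AddCommGroup V]
    [Module K V] (B : LinearMap.BilinForm K V) (W : Submodule K V) :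
    (B.restrict W).toQuadraticMap = B.toQuadraticMap.restrict W :=
  rfl

theorem LinearMap.BilinForm.nondegenerate_restrict_of_isCompl {K V : Type*} [Field K]
    [AddCommGroup V] [Module K V] {B : LinearMap.BilinForm K V} (hB : LinearMap.IsSymm B)
    (hnd : B.Nondegenerate) {E F : Submodule K V} (hEF : IsCompl E F)
    (horth : ∀ x ∈ E, ∀ y ∈ F, B x y = 0) : (B.restrict E).Nondegenerate := by
  refine B.nondegenerate_restrict_of_disjoint_orthogonal hB.isRefl
    (Submodule.disjoint_def.2 fun x hxE hxE' => hnd.2 x fun y => ?_)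
  have hy : y ∈ E ⊔ F := hEF.sup_eq_top ▸ Submodule.mem_top
  obtain ⟨e, he, f, hf, rfl⟩ := Submodule.mem_sup.1 hy
  rw [map_add, LinearMap.add_apply, mem_orthogonal_iff.1 hxE' e he, ← hB.eq, horth x hxE f hf]
  simp

namespace QuadraticMap.PosDef

variable {𝕜 M M' : Type*} [Field 𝕜] [PartialOrder 𝕜] [AddCommGroup M] [Module 𝕜 M]
  [AddCommGroup M'] [Module 𝕜 M'] {Q : QuadraticForm 𝕜 M} {Q' : QuadraticForm 𝕜 M'}
  {U : Submodule 𝕜 M}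

theorem restrict_map (hU : (Q.restrict U).PosDef) (f : M →ₗ[𝕜] M') (hf : ∀ x, Q' (f x) = Q x) :
    (Q'.restrict (U.map f)).PosDef := by
  rintro ⟨_, x, hx, rfl⟩ hx0
  have hx0' : (⟨x, hx⟩ : U) ≠ 0 := fun h => hx0 (by simp_all)
  simpa [hf] using hU _ hx0'

theorem finrank_map (hU : (Q.restrict U).PosDef) (f : M →ₗ[𝕜] M') (hf : ∀ x, Q' (f x) = Q x) :
    finrank 𝕜 (U.map f) = finrank 𝕜 U := by
  rw [← LinearMap.range_domRestrict]
  refine LinearMap.finrank_range_of_inj <| (injective_iff_map_eq_zero _).2 fun x hx => ?_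
  refine hU.anisotropic x ?_
  rw [restrict_apply, ← hf, ← LinearMap.domRestrict_apply, hx, map_zero]

theorem disjoint_of_isOrtho {B : LinearMap.BilinForm 𝕜 M} {W : Submodule 𝕜 M}
    (hU : (B.toQuadraticMap.restrict U).PosDef) (hUW : ∀ x ∈ U, ∀ y ∈ W, B x y = 0) :
    Disjoint U W := by
  refine Submodule.disjoint_def.2 fun x hxU hxW => ?_
  have : (⟨x, hxU⟩ : U) = 0 := hU.anisotropic _ (hUW x hxU x hxW)
  simpa using this

end QuadraticMap.PosDef

section Signature

variable {𝕜 V : Type*} [Field 𝕜] [LinearOrder 𝕜] [IsStrictOrderedRing 𝕜]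
  [AddCommGroup V] [Module 𝕜 V] {B : LinearMap.BilinForm 𝕜 V}

theorem equivalent_weightedSumSquares_of_isOrthoᵢ (hB : LinearMap.IsSymm B) {ι : Type*}
    [Fintype ι] (b : Basis ι 𝕜 V) (hb : B.IsOrthoᵢ b) :
    B.toQuadraticMap.Equivalent (weightedSumSquares 𝕜 fun i => B (b i) (b i)) := by
  let : Invertible (2 : 𝕜) := invertibleOfNonzero two_ne_zero
  have hassoc : associated B.toQuadraticMap = B := associated_left_inverse 𝕜 hB.eq
  have h := basisRepr_eq_of_iIsOrtho B.toQuadraticMap b (by rwa [hassoc])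
  exact ⟨h ▸ B.toQuadraticMap.isometryEquivBasisRepr b⟩

theorem sigPos_eq_ncard_of_isOrthoᵢ (hB : LinearMap.IsSymm B) {ι : Type*} [Fintype ι]
    (b : Basis ι 𝕜 V) (hb : B.IsOrthoᵢ b) :
    sigPos B.toQuadraticMap = {i | 0 < B (b i) (b i)}.ncard :=
  sigPos_of_equiv_weightedSumSquares (equivalent_weightedSumSquares_of_isOrthoᵢ hB b hb)

theorem sigNeg_eq_ncard_of_isOrthoᵢ (hB : LinearMap.IsSymm B) {ι : Type*} [Fintype ι]
    (b : Basis ι 𝕜 V) (hb : B.IsOrthoᵢ b) :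
    sigNeg B.toQuadraticMap = {i | B (b i) (b i) < 0}.ncard :=
  sigNeg_of_equiv_weightedSumSquares (equivalent_weightedSumSquares_of_isOrthoᵢ hB b hb)

theorem posDef_restrict_sup_of_isOrtho (hB : LinearMap.IsSymm B) {U W : Submodule 𝕜 V}
    (hU : (B.toQuadraticMap.restrict U).PosDef) (hW : (B.toQuadraticMap.restrict W).PosDef)
    (hUW : ∀ x ∈ U, ∀ y ∈ W, B x y = 0) : (B.toQuadraticMap.restrict (U ⊔ W)).PosDef := by
  rintro ⟨_, hx⟩ hx0
  obtain ⟨a, ha, c, hc, rfl⟩ := Submodule.mem_sup.1 hx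
  have hQa : 0 ≤ B a a := hU.nonneg ⟨a, ha⟩
  have hQc : 0 ≤ B c c := hW.nonneg ⟨c, hc⟩
  have hca : B c a = 0 := by simpa [hUW a ha c hc] using hB.eq c a
  have hQ : B (a + c) (a + c) = B a a + B c c := by simp [hUW a ha c hc, hca]
  change 0 < B (a + c) (a + c)
  rw [hQ]
  rcases eq_or_ne a 0 with rfl | ha0
  · have : 0 < B c c := hW ⟨c, hc⟩ (by simpa using hx0)
    linarith
  · have : 0 < B a a := hU ⟨a, ha⟩ (by simpa using ha0)
    linarith

variable [FiniteDimensional 𝕜 V]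

theorem two_mul_sigPos_restrict_le (hB : LinearMap.IsSymm B) {E F : Submodule 𝕜 V}
    (hEF : ∀ x ∈ E, ∀ y ∈ F, B x y = 0) (R : V →ₗ[𝕜] V) (hR : ∀ x, B (R x) (R x) = B x x)
    (hRE : ∀ x ∈ E, R x ∈ F) :
    2 * sigPos (B.toQuadraticMap.restrict E) ≤ sigPos B.toQuadraticMap := by
  obtain ⟨U, hU_rank, hU⟩ := exists_finrank_eq_sigPos_and_posDef (B.toQuadraticMap.restrict E)
  set U₁ := U.map E.subtype
  have hU₁ : (B.toQuadraticMap.restrict U₁).PosDef := hU.restrict_map E.subtype fun _ => rfl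
  have hU₁_rank : finrank 𝕜 U₁ = sigPos (B.toQuadraticMap.restrict E) := by
    rw [← hU_rank, hU.finrank_map (Q' := B.toQuadraticMap) E.subtype fun _ => rfl]
  set U₂ := U₁.map R
  have hU₂ : (B.toQuadraticMap.restrict U₂).PosDef := hU₁.restrict_map R hR
  have hU₂_rank : finrank 𝕜 U₂ = finrank 𝕜 U₁ := hU₁.finrank_map (Q' := B.toQuadraticMap) R hR
  have hU₁₂ : ∀ x ∈ U₁, ∀ y ∈ U₂, B x y = 0 := by
    rintro x hx _ ⟨y, hy, rfl⟩
    exact hEF x (E.map_subtype_le U hx) (R y) (hRE y (E.map_subtype_le U hy))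
  have hsup := le_sigPos_of_posDef _ (posDef_restrict_sup_of_isOrtho hB hU₁ hU₂ hU₁₂)
  have hrank := Submodule.finrank_sup_add_finrank_inf_eq U₁ U₂
  rw [(hU₁.disjoint_of_isOrtho hU₁₂).eq_bot, finrank_bot] at hrank
  omega

theorem two_mul_sigNeg_restrict_le (hB : LinearMap.IsSymm B) {E F : Submodule 𝕜 V}
    (hEF : ∀ x ∈ E, ∀ y ∈ F, B x y = 0) (R : V →ₗ[𝕜] V) (hR : ∀ x, B (R x) (R x) = B x x)
    (hRE : ∀ x ∈ E, R x ∈ F) :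
    2 * sigNeg (B.toQuadraticMap.restrict E) ≤ sigNeg B.toQuadraticMap := by
  have hB' : LinearMap.IsSymm (-B) := ⟨fun x y => by simpa using hB.eq x y⟩
  have := two_mul_sigPos_restrict_le hB' (by simpa using hEF) R (by simpa using hR) hRE
  have hneg : (-B.toQuadraticMap).restrict E = -(B.toQuadraticMap.restrict E) := rfl
  rwa [LinearMap.BilinMap.toQuadraticMap_neg, hneg, sigPos_neg, sigPos_neg] at this

end Signature

theorem Set.exists_equiv_sum_of_ncard_eq_ncard_compl {ι : Type*} [Finite ι] (s : Set ι)
    (h : s.ncard = sᶜ.ncard) :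
    ∃ e : Fin s.ncard ⊕ Fin s.ncard ≃ ι, (∀ k, e (.inl k) ∈ s) ∧ ∀ k, e (.inr k) ∉ s := by
  let es : Fin s.ncard ≃ s := (Finite.equivFin s).symm
  let ec : Fin s.ncard ≃ ↥sᶜ := (finCongr h).trans (Finite.equivFin ↥sᶜ).symm
  classical
  exact ⟨(Equiv.sumCongr es ec).trans (Equiv.sumCompl (· ∈ s)), fun k => (es k).2,
    fun k => (ec k).2⟩

section Real

variable {V : Type*} [AddCommGroup V] [Module ℝ V] [FiniteDimensional ℝ V]
  {B : LinearMap.BilinForm ℝ V}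

theorem exists_isOrthoᵢ_basis_eq_one_or_eq_neg_one (hB : LinearMap.IsSymm B)
    (hnd : B.SeparatingLeft) :
    ∃ u : Basis (Fin (finrank ℝ V)) ℝ V, B.IsOrthoᵢ u ∧
      ∀ i, B (u i) (u i) = 1 ∨ B (u i) (u i) = -1 := by
  obtain ⟨v, hv⟩ := LinearMap.BilinForm.exists_orthogonal_basis hB
  have hnz := hv.not_isOrtho_basis_self_of_separatingLeft hnd
  let c i : ℝˣ := Units.mk0 (√|B (v i) (v i)|)⁻¹ (by simpa using hnz i)
  refine ⟨v.unitsSMul c, fun i j hij => ?_, fun i => ?_⟩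
  · have : B (v i) (v j) = 0 := hv hij
    simp [Function.onFun, Basis.unitsSMul_apply, Units.smul_def, this]
  · have : B (v.unitsSMul c i) (v.unitsSMul c i) = B (v i) (v i) / |B (v i) (v i)| := by
      simp only [Basis.unitsSMul_apply, Units.smul_def, map_smul, LinearMap.smul_apply,
        smul_eq_mul, c, Units.val_mk0]
      rw [← mul_assoc, ← mul_inv, Real.mul_self_sqrt (abs_nonneg _), inv_mul_eq_div]
    rw [this]
    rcases (hnz i).lt_or_gt with h | h
    · simp [abs_of_neg h, h.ne]
    · simp [abs_of_pos h, h.ne']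

theorem sigPos_add_sigNeg_eq_finrank (hB : LinearMap.IsSymm B) (hnd : B.SeparatingLeft) :
    sigPos B.toQuadraticMap + sigNeg B.toQuadraticMap = finrank ℝ V := by
  obtain ⟨u, hu, hdiag⟩ := exists_isOrthoᵢ_basis_eq_one_or_eq_neg_one hB hnd
  have hneg : {i | B (u i) (u i) < 0} = {i | 0 < B (u i) (u i)}ᶜ := by
    ext i; rcases hdiag i with h | h <;> simp [h]
  rw [sigPos_eq_ncard_of_isOrthoᵢ hB u hu, sigNeg_eq_ncard_of_isOrthoᵢ hB u hu, hneg,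
    Set.ncard_add_ncard_compl, Nat.card_fin]

theorem isNeutral_iff (hB : LinearMap.IsSymm B) :
    IsNeutral B ↔ B.Nondegenerate ∧ sigPos B.toQuadraticMap = sigNeg B.toQuadraticMap := by
  have hnd_iff : B.Nondegenerate ↔ B.SeparatingLeft := hB.isRefl.nondegenerate_iff_separatingLeft
  rw [hnd_iff]
  constructor
  · rintro ⟨n, b, hb⟩
    have hb_ortho : B.IsOrthoᵢ b := LinearMap.isOrthoᵢ_def.2 fun i j hij => by simp [hb, hij]
    have hdiag i : B (b i) (b i) = Sum.elim (fun _ => 1) (fun _ => -1) i := by simp [hb]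
    have hpos : {i | 0 < B (b i) (b i)} = Set.range Sum.inl := by
      ext (i | i) <;> simp [hdiag]
    have hneg : {i | B (b i) (b i) < 0} = Set.range Sum.inr := by
      ext (i | i) <;> simp [hdiag]
    refine ⟨hb_ortho.separatingLeft_of_not_isOrtho_basis_self b fun i => by
      cases i <;> simp [hdiag], ?_⟩
    rw [sigPos_eq_ncard_of_isOrthoᵢ hB b hb_ortho, sigNeg_eq_ncard_of_isOrthoᵢ hB b hb_ortho,
      hpos, hneg, Set.ncard_range_of_injective Sum.inl_injective,
      Set.ncard_range_of_injective Sum.inr_injective]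
  · rintro ⟨hnd, hsig⟩
    obtain ⟨u, hu, hdiag⟩ := exists_isOrthoᵢ_basis_eq_one_or_eq_neg_one hB hnd
    set s := {i | 0 < B (u i) (u i)}
    have hneg : {i | B (u i) (u i) < 0} = sᶜ := by
      ext i; rcases hdiag i with h | h <;> simp [s, h]
    rw [sigPos_eq_ncard_of_isOrthoᵢ hB u hu, sigNeg_eq_ncard_of_isOrthoᵢ hB u hu, hneg] at hsig
    obtain ⟨e, hinl, hinr⟩ := s.exists_equiv_sum_of_ncard_eq_ncard_compl hsig
    refine ⟨s.ncard, u.reindex e.symm, fun i j => ?_⟩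
    simp only [Basis.reindex_apply, Equiv.symm_symm]
    split_ifs with hij
    · subst hij
      rcases i with k | k
      · have hpos : 0 < B (u (e (.inl k))) (u (e (.inl k))) := hinl k
        simpa using (hdiag _).resolve_right fun h => by linarith
      · have hnonpos : ¬0 < B (u (e (.inr k))) (u (e (.inr k))) := hinr k
        simpa using (hdiag _).resolve_left fun h => by linarith
    · exact hu (e.injective.ne hij)

theorem isNeutral_restrict_of_isometry_swap (hB : LinearMap.IsSymm B) (hBn : IsNeutral B)
    {E F : Submodule ℝ V} (hEF : IsCompl E F) (horth : ∀ x ∈ E, ∀ y ∈ F, B x y = 0)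
    {R : V →ₗ[ℝ] V} (hR : ∀ x, B (R x) (R x) = B x x) (hRE : ∀ x ∈ E, R x ∈ F)
    (hRF : ∀ x ∈ F, R x ∈ E) : IsNeutral (B.restrict E) := by
  obtain ⟨hnd, hsig⟩ := (isNeutral_iff hB).1 hBn
  have horth' : ∀ x ∈ F, ∀ y ∈ E, B x y = 0 := fun x hx y hy => by
    rw [← hB.eq]; exact horth y hy x hx
  have hndE := B.nondegenerate_restrict_of_isCompl hB hnd hEF horth
  have hndF := B.nondegenerate_restrict_of_isCompl hB hnd hEF.symm horth'
  have hBE : LinearMap.IsSymm (B.restrict E) := hB.domRestrict E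
  have hBF : LinearMap.IsSymm (B.restrict F) := hB.domRestrict F
  have hE := sigPos_add_sigNeg_eq_finrank hBE hndE.1
  have hF := sigPos_add_sigNeg_eq_finrank hBF hndF.1
  rw [B.toQuadraticMap_restrict] at hE hF
  have hV := sigPos_add_sigNeg_eq_finrank hB hnd.1
  have hEF_rank := Submodule.finrank_add_eq_of_isCompl hEF
  have := two_mul_sigPos_restrict_le hB horth R hR hRE
  have := two_mul_sigNeg_restrict_le hB horth R hR hRE
  have := two_mul_sigPos_restrict_le hB horth' R hR hRF
  have := two_mul_sigNeg_restrict_le hB horth' R hR hRF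
  refine (isNeutral_iff hBE).2 ⟨hndE, ?_⟩
  rw [B.toQuadraticMap_restrict]
  omega

end Real

/-- Let `V` be a neutral scalar product space and `P` an isometric involution.
If there is an isometry `R` with `P R = -R P`, then the restriction of the form to each
eigenspace `ker (P - id)` and `ker (P + id)` is nondegenerate and neutral. -/
theorem eigenspaces_neutral_of_anticommuting_isometry
    {V : Type*} [AddCommGroup V] [Module ℝ V] [FiniteDimensional ℝ V]
    (B : LinearMap.BilinForm ℝ V)
    (hBsymm : ∀ x y : V, B x y = B y x)
    (hBneutral : IsNeutral B)
    (P : V →ₗ[ℝ] V) (hP : P ∘ₗ P = LinearMap.id)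
    (hPiso : ∀ x y : V, B (P x) (P y) = B x y)
    (R : V →ₗ[ℝ] V) (hRiso : ∀ x y : V, B (R x) (R y) = B x y)
    (hPR : P ∘ₗ R = -(R ∘ₗ P)) :
    ((restrictForm B (LinearMap.ker (P - LinearMap.id))).Nondegenerate ∧
      IsNeutral (restrictForm B (LinearMap.ker (P - LinearMap.id)))) ∧
    ((restrictForm B (LinearMap.ker (P + LinearMap.id))).Nondegenerate ∧
      IsNeutral (restrictForm B (LinearMap.ker (P + LinearMap.id)))) := by
  have hB : LinearMap.IsSymm B := ⟨hBsymm⟩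
  obtain ⟨hnd, -⟩ := (isNeutral_iff hB).1 hBneutral
  have hcompl := isCompl_ker_sub_id_ker_add_id hP
  have horth := apply_eq_zero_of_mem_ker_sub_id_of_mem_ker_add_id hPiso
  have horth' : ∀ x ∈ LinearMap.ker (P + LinearMap.id), ∀ y ∈ LinearMap.ker (P - LinearMap.id),
      B x y = 0 := fun x hx y hy => by rw [hBsymm]; exact horth y hy x hx
  have hRP x : P (R x) = -R (P x) := LinearMap.congr_fun hPR x
  have hR₁₂ : ∀ x ∈ LinearMap.ker (P - LinearMap.id), R x ∈ LinearMap.ker (P + LinearMap.id) := by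
    intro x hx
    rw [mem_ker_add_id_iff, hRP, mem_ker_sub_id_iff.1 hx]
  have hR₂₁ : ∀ x ∈ LinearMap.ker (P + LinearMap.id), R x ∈ LinearMap.ker (P - LinearMap.id) := by
    intro x hx
    rw [mem_ker_sub_id_iff, hRP, mem_ker_add_id_iff.1 hx, map_neg, neg_neg]
  exact ⟨⟨B.nondegenerate_restrict_of_isCompl hB hnd hcompl horth,
      isNeutral_restrict_of_isometry_swap hB hBneutral hcompl horth (fun x => hRiso x x) hR₁₂ hR₂₁⟩,
    ⟨B.nondegenerate_restrict_of_isCompl hB hnd hcompl.symm horth',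
      isNeutral_restrict_of_isometry_swap hB hBneutral hcompl.symm horth' (fun x => hRiso x x)
        hR₂₁ hR₁₂⟩⟩
end

section
/- Suppose r − s ≡ 3 (mod 4) and s is odd, and let V be an irreducible Cl_{r,s}-module on which the volume form Ω = J_{z_1}···J_{z_{r+s}} acts as ±Id. Then V admits no nondegenerate symmetric bilinear form making all J_z skew-symmetric: for any symmetric bilinear form ⟨·,·⟩ with ⟨J_z x, y⟩ + ⟨x, J_z y⟩ = 0 for all z, every vector of V is a null vector, i.e. ⟨x, x⟩ = 0 for all x. -/
/-- Suppose `r - s ≡ 3 (mod 4)`, `s` is odd, and `V` is a `Cl_{r,s}`-module on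
which the volume form `Ω = J_{z_1} ⋯ J_{z_{r+s}}` acts as `±Id`. Then for any symmetric
bilinear form on `V` making all the `J_{z_i}` skew-symmetric, every vector is a null vector. -/
theorem no_admissible_form_when_s_odd
    {V : Type*} [AddCommGroup V] [Module ℝ V]
    (r s : ℕ) (hs : Odd s) (hrs : (r : ℤ) - (s : ℤ) ≡ 3 [ZMOD 4])
    (J : Fin (r + s) → Module.End ℝ V)
    (hsq : ∀ i, J i * J i =
      -(if (i : ℕ) < r then (1 : ℝ) else -1) • (1 : Module.End ℝ V))
    (hanti : ∀ i j, i ≠ j → J i * J j = -(J j * J i))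
    (hΩ : (List.ofFn J).prod = (1 : Module.End ℝ V) ∨
          (List.ofFn J).prod = -(1 : Module.End ℝ V))
    (B : LinearMap.BilinForm ℝ V) (hBsymm : ∀ x y : V, B x y = B y x)
    (hskew : ∀ (i : Fin (r + s)) (x y : V), B (J i x) y + B x (J i y) = 0) :
    ∀ x : V, B x x = 0 := by
  set ε : Fin (r + s) → ℝ := fun i => if (i : ℕ) < r then (1 : ℝ) else -1 with hε
  -- Each J i is an (anti-)isometry up to sign ε i.
  have step : ∀ (i : Fin (r + s)) (a : V), B (J i a) (J i a) = ε i * B a a := by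
    intro i a
    have h1 := hskew i a (J i a)
    have h2 : J i (J i a) = (-(ε i)) • a := by
      simp only [hε]
      rw [show (J i) ((J i) a) = (J i * J i) a from rfl, hsq i]
      simp only [LinearMap.smul_apply, Module.End.one_apply]
    have : B (J i a) (J i a) = - B a (J i (J i a)) := by linarith
    rw [this, h2]
    simp [mul_comm]
  -- Propagate through a product of the J's.
  have key : ∀ (l : List (Fin (r + s))) (x : V),
      B ((l.map J).prod x) ((l.map J).prod x) = (l.map ε).prod * B x x := by
    intro l
    induction l with
    | nil => intro x; simp
    | cons i t ih =>
        intro x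
        simp only [List.map_cons, List.prod_cons, Module.End.mul_apply]
        rw [step i, ih x]
        ring
  have hofn : (List.ofFn J) = (List.finRange (r + s)).map J := by
    simp [List.ofFn_eq_map]
  have hεprod : ((List.finRange (r + s)).map ε).prod = -1 := by
    have h1 : ((List.finRange (r + s)).map ε).prod = ∏ i : Fin (r + s), ε i := by
      rw [← List.ofFn_eq_map, List.prod_ofFn]
    rw [h1]
    have h2 : ∏ i : Fin (r + s), ε i
        = ∏ i ∈ Finset.range (r + s), (if i < r then (1 : ℝ) else -1) := by
      simp only [hε]
      exact Fin.prod_univ_eq_prod_range (fun k => if k < r then (1 : ℝ) else -1) (r + s)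
    rw [h2, Finset.prod_range_add]
    have hl : ∏ i ∈ Finset.range r, (if i < r then (1 : ℝ) else -1) = 1 := by
      apply Finset.prod_eq_one
      intro i hi
      simp [Finset.mem_range.mp hi]
    have hr : ∏ i ∈ Finset.range s, (if r + i < r then (1 : ℝ) else -1) = (-1 : ℝ) ^ s := by
      have hc : ∀ i ∈ Finset.range s, (if r + i < r then (1 : ℝ) else -1) = -1 := by
        intro i _; simp
      rw [Finset.prod_congr rfl hc, Finset.prod_const, Finset.card_range]
    rw [hl, hr, hs.neg_one_pow, one_mul]
  intro x
  have hmain := key (List.finRange (r + s)) x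
  rw [hεprod] at hmain
  have hΩx : ((List.finRange (r + s)).map J).prod x = x ∨
      ((List.finRange (r + s)).map J).prod x = -x := by
    rcases hΩ with h | h <;> rw [hofn] at h <;> [left; right] <;>
      simpa using congrArg (fun f : Module.End ℝ V => f x) h
  rcases hΩx with h | h <;> rw [h] at hmain <;> simp at hmain <;> linarith
end

section
/- Let (V, ⟨·,·⟩_V) be an admissible Cl_{r,s}-module and let 𝕁₁,…,𝕁_l be linear operators on V, each either symmetric or anti-symmetric with respect to ⟨·,·⟩_V, satisfying 𝕁_k² = −Id and 𝕁_k 𝕁_j = −𝕁_j 𝕁_k for k ≠ j. Then for any v ∈ V with ⟨v, v⟩_V = 1 there exists ṽ ∈ V with ⟨ṽ, ṽ⟩_V = 1 and ⟨ṽ, 𝕁_k ṽ⟩_V = 0 for all k = 1,…,l. -/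
/-- Given anticommuting complex structures `𝕁_k` (`𝕁_k² = -Id`), each symmetric
or anti-symmetric for a nondegenerate symmetric bilinear form on an admissible module, any
unit vector can be replaced by a unit vector `w` with `⟨w, 𝕁_k w⟩ = 0` for all `k`. -/
theorem exists_unit_vector_orthogonal_to_complex_structures
    {V : Type*} [AddCommGroup V] [Module ℝ V] [FiniteDimensional ℝ V]
    (B : LinearMap.BilinForm ℝ V) (hBnd : B.Nondegenerate)
    (hBsymm : ∀ x y : V, B x y = B y x)
    (l : ℕ) (𝕁 : Fin l → Module.End ℝ V)
    (hsa : ∀ k, (∀ x y : V, B (𝕁 k x) y = B x (𝕁 k y)) ∨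
                (∀ x y : V, B (𝕁 k x) y = -(B x (𝕁 k y))))
    (hsq : ∀ k, 𝕁 k * 𝕁 k = -(1 : Module.End ℝ V))
    (hanti : ∀ k j, k ≠ j → 𝕁 k * 𝕁 j = -(𝕁 j * 𝕁 k)) :
    ∀ v : V, B v v = 1 →
      ∃ w : V, B w w = 1 ∧ ∀ k, B w (𝕁 k w) = 0 := by
  intro v hv
  suffices H : ∀ k : ℕ, ∃ w, B w w = 1 ∧ ∀ j : Fin l, (j : ℕ) < k → B w (𝕁 j w) = 0 by
    obtain ⟨w, hw1, hw2⟩ := H l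
    exact ⟨w, hw1, fun j => hw2 j j.isLt⟩
  intro k
  induction k with
  | zero => exact ⟨v, hv, fun j hj => absurd hj (Nat.not_lt_zero _)⟩
  | succ k ih =>
    obtain ⟨w, hw1, hw0⟩ := ih
    by_cases hkl : k < l
    · set K : Fin l := ⟨k, hkl⟩ with hK
      have hJ2 : ∀ x, 𝕁 K (𝕁 K x) = -x := by
        intro x
        have := LinearMap.congr_fun (hsq K) x
        simpa [Module.End.mul_apply] using this
      rcases hsa K with hsym | hantisym
      · -- symmetric case
        set a := B w (𝕁 K w) with ha
        set d := Real.sqrt (1 + a ^ 2) with hdd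
        have hd : d ^ 2 = 1 + a ^ 2 := Real.sq_sqrt (by positivity)
        have hd1 : 1 ≤ d := by
          nlinarith [Real.sqrt_nonneg (1 + a ^ 2)]
        set u := (d + 1) • w + a • 𝕁 K w with hu
        have hJwJw : B (𝕁 K w) (𝕁 K w) = -1 := by
          rw [hsym, hJ2]; simp [hw1]
        have hJww : B (𝕁 K w) w = a := by rw [hBsymm]
        have huu : B u u = 2 * (d + 1) * d ^ 2 := by
          simp only [hu, map_add, map_smul, LinearMap.add_apply, LinearMap.smul_apply,
            smul_eq_mul, hw1, hJwJw, hJww, ← ha]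
          linear_combination (-(2 * d + 1)) * hd
        have hupos : 0 < B u u := by rw [huu]; nlinarith
        have hJu : 𝕁 K u = (d + 1) • 𝕁 K w - a • w := by
          simp only [hu, map_add, map_smul, hJ2, smul_neg]
          abel
        have huJu : B u (𝕁 K u) = 0 := by
          rw [hJu]
          simp only [hu, map_add, map_smul, map_sub, LinearMap.add_apply,
            LinearMap.smul_apply, LinearMap.sub_apply, smul_eq_mul, hw1, hJwJw, hJww, ← ha]
          linear_combination a * hd
        have huJj : ∀ j : Fin l, (j : ℕ) < k → B u (𝕁 j u) = 0 := by
          intro j hj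
          have hjK : K ≠ j := by
            intro h; rw [← h] at hj; simp [hK] at hj
          have hac : ∀ x, 𝕁 K (𝕁 j x) = -(𝕁 j (𝕁 K x)) := by
            intro x
            have := LinearMap.congr_fun (hanti K j hjK) x
            simpa [Module.End.mul_apply] using this
          have h1 : B w (𝕁 j w) = 0 := hw0 j hj
          have h2 : B (𝕁 K w) (𝕁 j w) = -(B w (𝕁 j (𝕁 K w))) := by
            rw [hsym, hac]; simp
          have h3 : B (𝕁 K w) (𝕁 j (𝕁 K w)) = 0 := by
            rw [hsym, hac, hJ2]
            simp [h1]
          rw [hu]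
          simp only [map_add, map_smul, LinearMap.add_apply, LinearMap.smul_apply,
            smul_eq_mul, h1, h2, h3]
          ring
        refine ⟨(Real.sqrt (B u u))⁻¹ • u, ?_, ?_⟩
        · simp only [map_smul, LinearMap.smul_apply, smul_eq_mul]
          rw [show (Real.sqrt (B u u))⁻¹ * ((Real.sqrt (B u u))⁻¹ * B u u)
              = (Real.sqrt (B u u) * Real.sqrt (B u u))⁻¹ * B u u by ring,
            Real.mul_self_sqrt hupos.le]
          field_simp
        · intro j hj
          simp only [map_smul, LinearMap.smul_apply, smul_eq_mul]
          rcases Nat.lt_succ_iff_lt_or_eq.mp hj with h | h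
          · rw [huJj j h]; ring
          · have : j = K := Fin.ext h
            rw [this, huJu]; ring
      · -- anti-symmetric case: automatic
        have hzero : ∀ x, B x (𝕁 K x) = 0 := by
          intro x
          have h1 := hantisym x x
          have h2 := hBsymm (𝕁 K x) x
          linarith
        refine ⟨w, hw1, fun j hj => ?_⟩
        rcases Nat.lt_succ_iff_lt_or_eq.mp hj with h | h
        · exact hw0 j h
        · have : j = K := Fin.ext h
          rw [this]; exact hzero w
    · exact ⟨w, hw1, fun j hj => hw0 j (by omega)⟩
end

section
/- Let Φ : N_{r,s}(U) → N_{r̃,s̃}(Ũ) be a Lie algebra isomorphism between pseudo H-type Lie algebras, written in block form Φ = (A, 0; B, C) relative to the decompositions U ⊕ ℝ^{r,s} and Ũ ⊕ ℝ^{r̃,s̃} (this form is forced since Φ maps center to center). Then A and C satisfy A^τ J̃_z A = J_{C^τ(z)} for all z ∈ ℝ^{r̃,s̃}, where A^τ and C^τ are adjoints with respect to the scalar products. Conversely, if bijective linear maps A, C satisfy this relation, then A ⊕ C is a Lie algebra isomorphism. -/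
/-!
Both conditions say the same thing once paired against the nondegenerate forms: by the defining
identity `⟨J_z x, y⟩ = ⟨z, [x, y]⟩` and the adjoint relations,
`⟨Aᵀ J̃_z A x, y⟩ = ⟨z, [A x, A y]~⟩` and `⟨J_{Cᵀ z} x, y⟩ = ⟨z, C [x, y]⟩`.
-/

namespace LinearMap

variable {R M N : Type*} [CommRing R] [AddCommGroup M] [Module R M] [AddCommGroup N] [Module R N]

theorem SeparatingLeft.eq_of_forall_apply_eq {B : M →ₗ[R] N →ₗ[R] R} (hB : B.SeparatingLeft)
    {x y : M} (h : ∀ n, B x n = B y n) : x = y :=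
  sub_eq_zero.mp <| hB _ fun n => by rw [map_sub, sub_apply, h, sub_self]

theorem SeparatingRight.eq_of_forall_apply_eq {B : M →ₗ[R] N →ₗ[R] R} (hB : B.SeparatingRight)
    {x y : N} (h : ∀ m, B m x = B m y) : x = y :=
  sub_eq_zero.mp <| hB _ fun m => by rw [map_sub, h, sub_self]

theorem IsAdjointPair.swap {B : M →ₗ[R] M →ₗ[R] R} {B' : N →ₗ[R] N →ₗ[R] R}
    (hB : ∀ x y, B x y = B y x) (hB' : ∀ x y, B' x y = B' y x) {f : M → N} {g : N → M}
    (h : IsAdjointPair B B' f g) : IsAdjointPair B' B g f := fun y x => by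
  rw [hB, ← h, hB']

end LinearMap

theorem pseudo_H_type_isomorphism_iff_intertwining_general
    {U W Z Z' : Type*}
    [AddCommGroup U] [Module ℝ U]
    [AddCommGroup W] [Module ℝ W]
    [AddCommGroup Z] [Module ℝ Z]
    [AddCommGroup Z'] [Module ℝ Z']
    (BU : LinearMap.BilinForm ℝ U) (hBUnd : BU.Nondegenerate)
    (hBUsymm : ∀ x y : U, BU x y = BU y x)
    (BW : LinearMap.BilinForm ℝ W)
    (hBWsymm : ∀ x y : W, BW x y = BW y x)
    (BZ : LinearMap.BilinForm ℝ Z)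
    (hBZsymm : ∀ a b : Z, BZ a b = BZ b a)
    (BZ' : LinearMap.BilinForm ℝ Z') (hBZ'nd : BZ'.Nondegenerate)
    (hBZ'symm : ∀ a b : Z', BZ' a b = BZ' b a)
    (J : Z →ₗ[ℝ] Module.End ℝ U) (J' : Z' →ₗ[ℝ] Module.End ℝ W)
    (br : U →ₗ[ℝ] U →ₗ[ℝ] Z)
    (hbr : ∀ (z : Z) (x y : U), BU (J z x) y = BZ z (br x y))
    (br' : W →ₗ[ℝ] W →ₗ[ℝ] Z')
    (hbr' : ∀ (z : Z') (x y : W), BW (J' z x) y = BZ' z (br' x y))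
    (A : U →ₗ[ℝ] W)
    (C : Z →ₗ[ℝ] Z')
    (Aτ : W →ₗ[ℝ] U) (hAτ : ∀ (x : U) (y : W), BW (A x) y = BU x (Aτ y))
    (Cτ : Z' →ₗ[ℝ] Z) (hCτ : ∀ (z : Z) (w : Z'), BZ' (C z) w = BZ z (Cτ w)) :
    (∀ x y : U, C (br x y) = br' (A x) (A y)) ↔
      (∀ z : Z', (Aτ ∘ₗ (J' z : W →ₗ[ℝ] W) ∘ₗ A : U →ₗ[ℝ] U) = J (Cτ z)) := by
  have hAτ' : LinearMap.IsAdjointPair BW BU Aτ A := .swap hBUsymm hBWsymm hAτ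
  have hCτ' : LinearMap.IsAdjointPair BZ' BZ Cτ C := .swap hBZsymm hBZ'symm hCτ
  have pair_conj (z : Z') (x y : U) : BU (Aτ (J' z (A x))) y = BZ' z (br' (A x) (A y)) := by
    rw [hAτ', hbr']
  have pair_J (z : Z') (x y : U) : BU (J (Cτ z) x) y = BZ' z (C (br x y)) := by
    rw [hbr, hCτ']
  constructor
  · intro h z
    ext x
    exact hBUnd.1.eq_of_forall_apply_eq fun y => by
      rw [LinearMap.comp_apply, LinearMap.comp_apply, pair_conj, pair_J, h]
  · intro h x y
    exact hBZ'nd.2.eq_of_forall_apply_eq fun z => by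
      rw [← pair_J, ← pair_conj, ← h z, LinearMap.comp_apply, LinearMap.comp_apply]

/-- For a map `Φ = (A, 0; B, C)` between pseudo `H`-type algebras (block form
forced by mapping center to center), `Φ` is a Lie algebra isomorphism, i.e.
`C [x,y] = [A x, A y]` for all `x, y`, if and only if `Aᵀ J̃_z A = J_{Cᵀ z}` for all `z`. -/
theorem pseudo_H_type_isomorphism_iff_intertwining
    {U W Z Z' : Type*}
    [AddCommGroup U] [Module ℝ U] [FiniteDimensional ℝ U]
    [AddCommGroup W] [Module ℝ W] [FiniteDimensional ℝ W]
    [AddCommGroup Z] [Module ℝ Z] [FiniteDimensional ℝ Z]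
    [AddCommGroup Z'] [Module ℝ Z'] [FiniteDimensional ℝ Z']
    (BU : LinearMap.BilinForm ℝ U) (hBUnd : BU.Nondegenerate)
    (hBUsymm : ∀ x y : U, BU x y = BU y x)
    (BW : LinearMap.BilinForm ℝ W) (hBWnd : BW.Nondegenerate)
    (hBWsymm : ∀ x y : W, BW x y = BW y x)
    (BZ : LinearMap.BilinForm ℝ Z) (hBZnd : BZ.Nondegenerate)
    (hBZsymm : ∀ a b : Z, BZ a b = BZ b a)
    (BZ' : LinearMap.BilinForm ℝ Z') (hBZ'nd : BZ'.Nondegenerate)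
    (hBZ'symm : ∀ a b : Z', BZ' a b = BZ' b a)
    (J : Z →ₗ[ℝ] Module.End ℝ U) (J' : Z' →ₗ[ℝ] Module.End ℝ W)
    (br : U →ₗ[ℝ] U →ₗ[ℝ] Z)
    (hbr : ∀ (z : Z) (x y : U), BU (J z x) y = BZ z (br x y))
    (br' : W →ₗ[ℝ] W →ₗ[ℝ] Z')
    (hbr' : ∀ (z : Z') (x y : W), BW (J' z x) y = BZ' z (br' x y))
    (A : U →ₗ[ℝ] W) (hA : Function.Bijective A)
    (C : Z →ₗ[ℝ] Z') (hC : Function.Bijective C)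
    (Aτ : W →ₗ[ℝ] U) (hAτ : ∀ (x : U) (y : W), BW (A x) y = BU x (Aτ y))
    (Cτ : Z' →ₗ[ℝ] Z) (hCτ : ∀ (z : Z) (w : Z'), BZ' (C z) w = BZ z (Cτ w)) :
    (∀ x y : U, C (br x y) = br' (A x) (A y)) ↔
      (∀ z : Z', (Aτ ∘ₗ (J' z : W →ₗ[ℝ] W) ∘ₗ A : U →ₗ[ℝ] U) = J (Cτ z)) :=
  pseudo_H_type_isomorphism_iff_intertwining_general BU hBUnd hBUsymm BW hBWsymm BZ hBZsymm BZ'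
    hBZ'nd hBZ'symm J J' br hbr br' hbr' A C Aτ hAτ Cτ hCτ
end

section
/- Suppose Ψ = A ⊕ C is a Lie algebra isomorphism from N_{r,s}(U) to N_{r,s}(Ũ) with A : U → Ũ, C : ℝ^{r,s} → ℝ^{r,s} satisfying A^τ J̃_z A = J_{C^τ(z)} for all z and C C^τ = Id. Then the adjoint map Ψ^τ = A^τ ⊕ C^τ : N_{r,s}(Ũ) → N_{r,s}(U) is also a Lie algebra isomorphism, i.e. A J_{C^τ(z)} A^τ = J̃_z for all z. -/
/-!
For a non-null `z`, put `K = J_{Cᵀ z}` and `L = J̃_z`. Since `C Cᵀ = Id`, `Cᵀ` preserves the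
quadratic form, so `K² = L² = -⟨z, z⟩ Id` with `-⟨z, z⟩ ≠ 0`. From `Aᵀ L A = K` one gets
`(A K Aᵀ) L A = A K² = -⟨z, z⟩ A`, hence `(A K Aᵀ) L = L²` because `A` is onto, and cancelling
the invertible `L` gives `A K Aᵀ = L`. Both sides are linear in `z`, and a linear map is
determined by its values on the non-null vectors of a nondegenerate symmetric form: every `z` is
`(z + t w) - t w` with `w` and `z + t w` non-null for a suitable `t ∈ {0, 1, 2}`.
-/

namespace LinearMap

theorem exists_bilinForm_add_smul_self_ne_zero {Z : Type*} [AddCommGroup Z] [Module ℝ Z]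
    (B : LinearMap.BilinForm ℝ Z) (z : Z) {w : Z} (hw : B w w ≠ 0) :
    ∃ t : ℝ, B (z + t • w) (z + t • w) ≠ 0 := by
  have expand : ∀ t : ℝ,
      B (z + t • w) (z + t • w) = B z z + t * (B z w + B w z) + t ^ 2 * B w w := by
    intro t
    simp only [map_add, map_smul, add_apply, smul_apply, smul_eq_mul]
    ring
  by_contra! h
  have h0 := h 0
  have h1 := h 1
  have h2 := h 2
  rw [expand] at h0 h1 h2
  -- the second difference of the quadratic `t ↦ B (z + t • w) (z + t • w)` is `2 B w w`
  exact hw (by linarith)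

theorem ext_of_bilinForm_self_ne_zero {Z M : Type*} [AddCommGroup Z] [Module ℝ Z]
    [AddCommGroup M] [Module ℝ M] {B : LinearMap.BilinForm ℝ Z} (hB : B.Nondegenerate)
    (hBsymm : IsSymm B) {f g : Z →ₗ[ℝ] M} (h : ∀ z, B z z ≠ 0 → f z = g z) : f = g := by
  ext z
  by_cases hB0 : B = 0
  · obtain rfl : z = 0 := hB.1 z fun _ => by simp [hB0]
    simp
  obtain ⟨w, hw⟩ := BilinForm.exists_bilinForm_self_ne_zero hB0 hBsymm
  obtain ⟨t, ht⟩ := exists_bilinForm_add_smul_self_ne_zero B z hw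
  have hzw := h _ ht
  rw [map_add, map_add, map_smul, map_smul, h w hw] at hzw
  exact add_right_cancel hzw

theorem comp_comp_eq_of_comp_comp_eq {𝕜 U W : Type*} [Field 𝕜] [AddCommGroup U] [Module 𝕜 U]
    [AddCommGroup W] [Module 𝕜 W] {A : U →ₗ[𝕜] W} (hA : Function.Surjective A)
    {Aτ : W →ₗ[𝕜] U} {K : Module.End 𝕜 U} {L : Module.End 𝕜 W} {c : 𝕜} (hc : c ≠ 0)
    (hK : K * K = c • 1) (hL : L * L = c • 1) (h : Aτ ∘ₗ L ∘ₗ A = K) :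
    A ∘ₗ K ∘ₗ Aτ = L := by
  have hLA : (A ∘ₗ K ∘ₗ Aτ) ∘ₗ L ∘ₗ A = (L * L) ∘ₗ A := by
    calc (A ∘ₗ K ∘ₗ Aτ) ∘ₗ L ∘ₗ A = A ∘ₗ (K * K) := by rw [← h]; rfl
      _ = (L * L) ∘ₗ A := by rw [hK, hL]; ext; simp
  have hconj_mul : (A ∘ₗ K ∘ₗ Aτ) * L = L * L := (cancel_right hA).1 hLA
  have hsmul : c • (A ∘ₗ K ∘ₗ Aτ) = c • L := by
    calc c • (A ∘ₗ K ∘ₗ Aτ) = (A ∘ₗ K ∘ₗ Aτ) * (L * L) := by rw [hL]; ext; simp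
      _ = (L * L) * L := by rw [← mul_assoc, hconj_mul]
      _ = c • L := by rw [hL]; ext; simp
  exact smul_right_injective _ hc hsmul

end LinearMap

theorem adjoint_of_isomorphism_is_isomorphism_general
    {U W Z : Type*}
    [AddCommGroup U] [Module ℝ U]
    [AddCommGroup W] [Module ℝ W]
    [AddCommGroup Z] [Module ℝ Z]
    (BZ : LinearMap.BilinForm ℝ Z) (hBZnd : BZ.Nondegenerate)
    (hBZsymm : ∀ a b : Z, BZ a b = BZ b a)
    (J : Z →ₗ[ℝ] Module.End ℝ U)
    (hJ : ∀ z, J z * J z = -(BZ z z) • (1 : Module.End ℝ U))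
    (J' : Z →ₗ[ℝ] Module.End ℝ W)
    (hJ' : ∀ z, J' z * J' z = -(BZ z z) • (1 : Module.End ℝ W))
    (A : U →ₗ[ℝ] W) (hA : Function.Bijective A)
    (C : Z →ₗ[ℝ] Z)
    (Aτ : W →ₗ[ℝ] U)
    (Cτ : Z →ₗ[ℝ] Z) (hCτ : ∀ a b : Z, BZ (C a) b = BZ a (Cτ b))
    (hrel : ∀ z : Z, (Aτ ∘ₗ (J' z : W →ₗ[ℝ] W) ∘ₗ A : U →ₗ[ℝ] U) = J (Cτ z))
    (hCCτ : C ∘ₗ Cτ = LinearMap.id) :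
    ∀ z : Z, (A ∘ₗ (J (Cτ z) : U →ₗ[ℝ] U) ∘ₗ Aτ : W →ₗ[ℝ] W) = J' z := by
  have hCτ_isometry : ∀ z, BZ (Cτ z) (Cτ z) = BZ z z := fun z => by
    rw [← hCτ, ← LinearMap.comp_apply C Cτ, hCCτ, LinearMap.id_apply]
  have key : ∀ z, BZ z z ≠ 0 → A ∘ₗ J (Cτ z) ∘ₗ Aτ = J' z := fun z hz =>
    LinearMap.comp_comp_eq_of_comp_comp_eq hA.2 (neg_ne_zero.2 hz)
      (by rw [hJ, hCτ_isometry]) (hJ' z) (hrel z)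
  have hext := LinearMap.ext_of_bilinForm_self_ne_zero hBZnd ⟨hBZsymm⟩
    (f := LinearMap.llcomp ℝ W U W A ∘ₗ LinearMap.lcomp ℝ U Aτ ∘ₗ J ∘ₗ Cτ) (g := J') key
  exact fun z => LinearMap.congr_fun hext z

/-- If `Ψ = A ⊕ C : N_{r,s}(U) → N_{r,s}(W)` satisfies the isomorphism
relation `Aᵀ J̃_z A = J_{Cᵀ z}` with `C Cᵀ = Id`, then the adjoint `Ψᵀ = Aᵀ ⊕ Cᵀ` is also a
Lie algebra isomorphism, i.e. `A J_{Cᵀ z} Aᵀ = J̃_z` for all `z`. -/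
theorem adjoint_of_isomorphism_is_isomorphism
    {U W Z : Type*}
    [AddCommGroup U] [Module ℝ U] [FiniteDimensional ℝ U]
    [AddCommGroup W] [Module ℝ W] [FiniteDimensional ℝ W]
    [AddCommGroup Z] [Module ℝ Z] [FiniteDimensional ℝ Z]
    (BU : LinearMap.BilinForm ℝ U) (hBUnd : BU.Nondegenerate)
    (hBUsymm : ∀ x y : U, BU x y = BU y x)
    (BW : LinearMap.BilinForm ℝ W) (hBWnd : BW.Nondegenerate)
    (hBWsymm : ∀ x y : W, BW x y = BW y x)
    (BZ : LinearMap.BilinForm ℝ Z) (hBZnd : BZ.Nondegenerate)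
    (hBZsymm : ∀ a b : Z, BZ a b = BZ b a)
    (J : Z →ₗ[ℝ] Module.End ℝ U)
    (hJ : ∀ z, J z * J z = -(BZ z z) • (1 : Module.End ℝ U))
    (hJskew : ∀ (z : Z) (x y : U), BU (J z x) y + BU x (J z y) = 0)
    (J' : Z →ₗ[ℝ] Module.End ℝ W)
    (hJ' : ∀ z, J' z * J' z = -(BZ z z) • (1 : Module.End ℝ W))
    (hJ'skew : ∀ (z : Z) (x y : W), BW (J' z x) y + BW x (J' z y) = 0)
    (A : U →ₗ[ℝ] W) (hA : Function.Bijective A)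
    (C : Z →ₗ[ℝ] Z) (hC : Function.Bijective C)
    (Aτ : W →ₗ[ℝ] U) (hAτ : ∀ (x : U) (y : W), BW (A x) y = BU x (Aτ y))
    (Cτ : Z →ₗ[ℝ] Z) (hCτ : ∀ a b : Z, BZ (C a) b = BZ a (Cτ b))
    (hrel : ∀ z : Z, (Aτ ∘ₗ (J' z : W →ₗ[ℝ] W) ∘ₗ A : U →ₗ[ℝ] U) = J (Cτ z))
    (hCCτ : C ∘ₗ Cτ = LinearMap.id) :
    ∀ z : Z, (A ∘ₗ (J (Cτ z) : U →ₗ[ℝ] U) ∘ₗ Aτ : W →ₗ[ℝ] W) = J' z :=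
  adjoint_of_isomorphism_is_isomorphism_general BZ hBZnd hBZsymm J hJ J' hJ' A hA C Aτ Cτ hCτ hrel
    hCCτ
end

section
/- Let {x_i}_{i=1}^{2N} ∪ {z_k}_{k=1}^{r+s} be an integral basis of the pseudo H-type algebra N_{r,s}: the x_i are orthonormal in V^{r,s} with ⟨x_i, x_i⟩ = 1 for i ≤ N and = −1 for i > N, the z_k orthonormal in ℝ^{r,s}, and each J_{z_k} maps each x_i to ±x_j for some j ≠ i. Write [x_i, x_j] = Σ_k c_{ij}^k z_k. Then if both i, j ≤ N or both i, j > N and [x_i, x_j] = ±z_k, then ⟨z_k, z_k⟩_{r,s} = 1; and if i ≤ N < j and [x_i, x_j] = ±z_k, then ⟨z_k, z_k⟩_{r,s} = −1. -/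
/-- For an integral basis `{x_i} ∪ {z_k}` of the pseudo `H`-type algebra
`N_{r,s}` (the `x_i` orthonormal, positive for `i < N` and negative otherwise; the `z_k`
orthonormal; each `J_{z_k}` mapping each `x_i` to `±x_j`, `j ≠ i`): if `[x_i, x_j] = ±z_k`
with `i, j` both positive or both negative then `⟨z_k, z_k⟩ = 1`, while if `x_i` is positive
and `x_j` negative then `⟨z_k, z_k⟩ = -1`. -/
theorem integral_basis_bracket_sign
    {V Z : Type*}
    [AddCommGroup V] [Module ℝ V] [FiniteDimensional ℝ V]
    [AddCommGroup Z] [Module ℝ Z] [FiniteDimensional ℝ Z]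
    (BV : LinearMap.BilinForm ℝ V) (hBVsymm : ∀ x y : V, BV x y = BV y x)
    (BZ : LinearMap.BilinForm ℝ Z) (hBZsymm : ∀ a b : Z, BZ a b = BZ b a)
    (r s N : ℕ)
    (z : Fin (r + s) → Z)
    (hz : ∀ k, BZ (z k) (z k) = if (k : ℕ) < r then 1 else -1)
    (hzo : ∀ k l, k ≠ l → BZ (z k) (z l) = 0)
    (J : Z →ₗ[ℝ] Module.End ℝ V)
    (hCl : ∀ a b : Z, J a * J b + J b * J a = -(2 * BZ a b) • (1 : Module.End ℝ V))
    (hskew : ∀ (a : Z) (x y : V), BV (J a x) y + BV x (J a y) = 0)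
    (x : Fin (2 * N) → V)
    (hx : ∀ i j, BV (x i) (x j) =
      if i = j then (if (i : ℕ) < N then 1 else -1) else 0)
    (hmap : ∀ k i, ∃ j, j ≠ i ∧ (J (z k) (x i) = x j ∨ J (z k) (x i) = -(x j)))
    (br : V →ₗ[ℝ] V →ₗ[ℝ] Z)
    (hbr : ∀ (a : Z) (u v : V), BV (J a u) v = BZ a (br u v)) :
    (∀ (i j : Fin (2 * N)) (k : Fin (r + s)), ((i : ℕ) < N ∧ (j : ℕ) < N) ∨ (N ≤ (i : ℕ) ∧ N ≤ (j : ℕ)) →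
      (br (x i) (x j) = z k ∨ br (x i) (x j) = -(z k)) → BZ (z k) (z k) = 1) ∧
    (∀ (i j : Fin (2 * N)) (k : Fin (r + s)), (i : ℕ) < N → N ≤ (j : ℕ) →
      (br (x i) (x j) = z k ∨ br (x i) (x j) = -(z k)) → BZ (z k) (z k) = -1) := by
  -- J (z k) squares to - ⟨z k, z k⟩ • id
  have hJJ : ∀ (k : Fin (r + s)) (v : V),
      J (z k) (J (z k) v) = (-(BZ (z k) (z k))) • v := by
    intro k v
    have h := hCl (z k) (z k)
    have h2 := congrArg (fun f : Module.End ℝ V => f v) h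
    simp only [Module.End.mul_apply, LinearMap.add_apply, LinearMap.smul_apply,
      Module.End.one_apply] at h2
    have h3 : (2 : ℝ) • (J (z k) (J (z k) v)) = (-(2 * BZ (z k) (z k))) • v := by
      rw [two_smul]; exact h2
    have h4 : (2 : ℝ) • (J (z k) (J (z k) v)) = (2 : ℝ) • ((-(BZ (z k) (z k))) • v) := by
      rw [h3, smul_smul]; ring_nf
    exact smul_right_injective V (two_ne_zero) h4
  -- main computation
  have key : ∀ (i j : Fin (2 * N)) (k : Fin (r + s)),
      (br (x i) (x j) = z k ∨ br (x i) (x j) = -(z k)) →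
      BZ (z k) (z k) = (if (i : ℕ) < N then (1 : ℝ) else -1) *
        (if (j : ℕ) < N then (1 : ℝ) else -1) := by
    intro i j k hbrk
    have hεval := hz k
    have hne : BZ (z k) (z k) ≠ 0 := by
      rw [hεval]; split_ifs <;> norm_num
    have h1 : BV (J (z k) (x i)) (x j) = BZ (z k) (br (x i) (x j)) := hbr _ _ _
    have h2 : BV (J (z k) (x i)) (x j) ≠ 0 := by
      rcases hbrk with h | h <;> rw [h1, h]
      · exact hne
      · simp only [map_neg]; exact neg_ne_zero.mpr hne
    obtain ⟨m, hmne, hmcase⟩ := hmap k i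
    have hmj : m = j := by
      by_contra hmj
      rcases hmcase with h | h <;> rw [h] at h2 <;>
        simp [hx, hmj] at h2
    subst hmj
    -- BV (J zk xi) (J zk xi) = εk * BV xi xi
    have hs : BV (J (z k) (x i)) (J (z k) (x i)) = BZ (z k) (z k) * BV (x i) (x i) := by
      have h := hskew (z k) (x i) (J (z k) (x i))
      rw [hJJ k (x i)] at h
      simp only [map_smul, smul_eq_mul, neg_mul] at h
      linarith
    have hmain : BV (x m) (x m) = BZ (z k) (z k) * BV (x i) (x i) := by
      rcases hmcase with h | h <;> rw [h] at hs
      · exact hs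
      · simpa using hs
    rw [hx i i, hx m m] at hmain
    simp only [if_pos rfl] at hmain
    split_ifs at hmain ⊢ <;> linarith
  constructor
  · intro i j k hcase hbrk
    have h := key i j k hbrk
    rcases hcase with ⟨h1, h2⟩ | ⟨h1, h2⟩
    · rw [if_pos h1, if_pos h2] at h; linarith
    · rw [if_neg (not_lt.mpr h1), if_neg (not_lt.mpr h2)] at h; linarith
  · intro i j k h1 h2 hbrk
    have h := key i j k hbrk
    rw [if_pos h1, if_neg (not_lt.mpr h2)] at h; linarith
end

section
/- Suppose r − s ≡ 3 (mod 4) and there is a Lie algebra isomorphism Φ = A ⊕ C : N_{r,s}(V₊) → N_{r,s}(V₋) between the pseudo H-type algebras built on the two non-equivalent irreducible minimal admissible Cl_{r,s}-modules, with A^τ J̃_z A = J_{C^τ(z)} and C C^τ = Id. Then A A^τ = −(det C)·Id. Moreover if s = 0 (so that the scalar products are positive definite) then det C = −1 and A A^τ = Id. -/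
/-!
Put `K = A Aτ` and `aᵢ = J̃_{C zᵢ}` for the orthonormal basis `zᵢ`. Conjugation by `A` carries
`K aᵢ` to `J_{zᵢ}`, so `(K aᵢ)² = J_{zᵢ}² = aᵢ²` (`C` is an isometry), i.e. `K aᵢ K = aᵢ`, and it
carries `∏ K aᵢ` to the volume form `Ω = Id` of `V₊`. Since `n = r + s` is odd, the relations
`K aᵢ K = aᵢ` collapse `∏ K aᵢ` to `K ∏ aᵢ`, so `K ∏ aᵢ = Id`.

On orthogonal frames `v`, the product `∏ J̃_{vᵢ}` is `1/n!` times the alternatization of the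
multilinear map `v ↦ ∏ J̃_{vᵢ}`, an alternating `n`-form; hence `∏ aᵢ = det C · Ω̃ = -det C`.
As `C` is an isometry, `det C = ±1`, so `K = -det C`. In the definite case `A Aτ` is positive,
which rules out `det C = 1`.
-/

theorem List.prod_map_mul_left_eq_pow_mul {M : Type*} [Monoid M] (k : M) (l : List M)
    (h : ∀ x ∈ l, k * x * k = x) :
    (l.map (k * ·)).prod = k ^ (l.length % 2) * l.prod := by
  induction l with
  | nil => simp
  | cons x t ih =>
    rw [List.map_cons, List.prod_cons, ih fun y hy => h y (List.mem_cons_of_mem x hy),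
      List.length_cons, List.prod_cons]
    rcases Nat.mod_two_eq_zero_or_one t.length with ht | ht
    · rw [ht, pow_zero, one_mul, Nat.add_mod, ht, pow_one, mul_assoc]
    · rw [ht, pow_one, Nat.add_mod, ht, ← mul_assoc, ← mul_assoc, h x List.mem_cons_self,
        pow_zero, one_mul]

theorem mul_prod_ofFn_eq_one_of_odd {M : Type*} [Monoid M] {n : ℕ} (hn : Odd n) (k : M)
    (x : Fin n → M) (hx : ∀ i, IsUnit (x i)) (hsq : ∀ i, k * x i * (k * x i) = x i * x i)
    (hprod : (List.ofFn fun i => k * x i).prod = 1) :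
    k * (List.ofFn x).prod = 1 := by
  have hkxk : ∀ y ∈ List.ofFn x, k * y * k = y := by
    rw [List.forall_mem_ofFn_iff]
    exact fun i => (hx i).mul_right_cancel (by rw [mul_assoc, hsq])
  have h := List.prod_map_mul_left_eq_pow_mul k _ hkxk
  rw [List.length_ofFn, Nat.odd_iff.1 hn, pow_one, List.map_ofFn] at h
  exact h.symm.trans hprod

section Anticommuting

variable {R : Type*} [Ring R]

open Equiv

theorem prod_ofFn_comp_swap_castSucc_succ {k : ℕ} (m : Fin (k + 1) → R) (i : Fin k)
    (hm : m i.castSucc * m i.succ = -(m i.succ * m i.castSucc)) :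
    (List.ofFn (m ∘ swap i.castSucc i.succ)).prod = -(List.ofFn m).prod := by
  induction k with
  | zero => exact i.elim0
  | succ k ih =>
    cases i using Fin.cases with
    | zero =>
      have hfix : ∀ t : Fin k, swap (0 : Fin (k + 2)) 1 t.succ.succ = t.succ.succ :=
        fun t => swap_apply_of_ne_of_ne (Fin.succ_ne_zero _) (Fin.succ_succ_ne_one t)
      simp only [Fin.castSucc_zero, Fin.succ_zero_eq_one] at hm ⊢
      simp only [List.ofFn_succ, List.prod_cons, Function.comp_apply, Fin.succ_zero_eq_one,
        swap_apply_left, swap_apply_right, hfix, ← mul_assoc, hm, neg_mul, neg_neg]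
    | succ j =>
      rw [← Fin.succ_castSucc] at hm ⊢
      have hhead : swap j.castSucc.succ j.succ.succ 0 = 0 :=
        swap_apply_of_ne_of_ne (Fin.succ_ne_zero _).symm (Fin.succ_ne_zero _).symm
      have htail : ∀ t : Fin (k + 1),
          swap j.castSucc.succ j.succ.succ t.succ = (swap j.castSucc j.succ t).succ :=
        fun t => (Fin.succ_injective _).swap_apply _ _ _
      rw [List.ofFn_succ, List.ofFn_succ (n := k + 1), List.prod_cons, List.prod_cons]
      simp only [Function.comp_apply, hhead, htail]
      rw [← mul_neg]
      exact congrArg (m 0 * ·) (ih (m ∘ Fin.succ) j hm)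

theorem prod_ofFn_comp_perm {k : ℕ} (σ : Perm (Fin k)) (m : Fin k → R)
    (hm : Pairwise fun i j => m i * m j = -(m j * m i)) :
    (List.ofFn (m ∘ σ)).prod = Perm.sign σ • (List.ofFn m).prod := by
  cases k with
  | zero => simp [Subsingleton.elim σ 1]
  | succ k =>
    have hσ : σ ∈ Submonoid.closure (Set.range fun i : Fin k => swap i.castSucc i.succ) :=
      (Perm.mclosure_swap_castSucc_succ k).symm ▸ Submonoid.mem_top σ
    induction hσ using Submonoid.closure_induction generalizing m with
    | mem τ hτ =>
      obtain ⟨i, rfl⟩ := hτ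
      have hi : i.castSucc ≠ i.succ := Fin.castSucc_lt_succ.ne
      rw [prod_ofFn_comp_swap_castSucc_succ m i (hm hi), Perm.sign_swap hi, Units.neg_smul,
        one_smul]
    | one => simp
    | mul σ τ _ _ hσ hτ =>
      rw [Perm.coe_mul, ← Function.comp_assoc, hτ (m ∘ σ) (hm.comp_of_injective σ.injective),
        hσ m hm, Perm.sign_mul, mul_comm, mul_smul]

end Anticommuting

theorem MultilinearMap.alternatization_apply_of_map_comp_perm {R M N ι : Type*} [Semiring R]
    [AddCommMonoid M] [Module R M] [AddCommGroup N] [Module R N] [Fintype ι] [DecidableEq ι]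
    (F : MultilinearMap R (fun _ : ι => M) N) (v : ι → M)
    (hv : ∀ σ : Equiv.Perm ι, F (v ∘ σ) = Equiv.Perm.sign σ • F v) :
    MultilinearMap.alternatization F v = (Fintype.card ι).factorial • F v := by
  have hterm (σ : Equiv.Perm ι) : Equiv.Perm.sign σ • F.domDomCongr σ v = F v := by
    change Equiv.Perm.sign σ • F (v ∘ σ) = F v
    rw [hv σ, smul_smul, Int.units_mul_self, one_smul]
  simp only [MultilinearMap.alternatization_apply, hterm, Finset.sum_const, Finset.card_univ,
    Fintype.card_perm]

section Determinant

variable {𝕜 Z R ι : Type*} [Field 𝕜] [AddCommGroup Z] [Module 𝕜 Z] [Fintype ι] [DecidableEq ι]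

theorem AlternatingMap.map_comp_basis_eq_det_smul [AddCommGroup R] [Module 𝕜 R]
    (G : Z [⋀^ι]→ₗ[𝕜] R) (b : Module.Basis ι 𝕜 Z) (f : Z →ₗ[𝕜] Z) :
    G (f ∘ b) = LinearMap.det f • G b := by
  rw [← sub_eq_zero, ← Module.forall_dual_apply_eq_zero_iff 𝕜]
  intro φ
  have h := AlternatingMap.eq_smul_basis_det b (φ.compAlternatingMap G)
  have h' := congrArg (· (f ∘ b)) h
  simp only [LinearMap.compAlternatingMap_apply, AlternatingMap.smul_apply,
    Module.Basis.det_comp, Module.Basis.det_self, smul_eq_mul] at h'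
  rw [map_sub, map_smul, h', smul_eq_mul]
  ring

theorem prod_ofFn_comp_eq_det_smul_of_anticomm [CharZero 𝕜] [Ring R] [Algebra 𝕜 R] {n : ℕ}
    (J : Z →ₗ[𝕜] R) (b : Module.Basis (Fin n) 𝕜 Z) (f : Z →ₗ[𝕜] Z)
    (hb : Pairwise fun i j => J (b i) * J (b j) = -(J (b j) * J (b i)))
    (hfb : Pairwise fun i j => J (f (b i)) * J (f (b j)) = -(J (f (b j)) * J (f (b i)))) :
    (List.ofFn fun i => J (f (b i))).prod =
      LinearMap.det f • (List.ofFn fun i => J (b i)).prod := by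
  set F := (MultilinearMap.mkPiAlgebraFin 𝕜 n R).compLinearMap fun _ => J
  have hF (v : Fin n → Z) (hv : Pairwise fun i j => J (v i) * J (v j) = -(J (v j) * J (v i))) :
      MultilinearMap.alternatization F v =
        (n.factorial : 𝕜) • (List.ofFn fun i => J (v i)).prod := by
    have h := F.alternatization_apply_of_map_comp_perm v fun σ => prod_ofFn_comp_perm σ (J ∘ v) hv
    rwa [Fintype.card_fin, ← Nat.cast_smul_eq_nsmul 𝕜] at h
  have h := (MultilinearMap.alternatization F).map_comp_basis_eq_det_smul b f
  rw [hF (f ∘ b) hfb, hF b hb, smul_comm] at h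
  exact smul_right_injective R (Nat.cast_ne_zero.2 n.factorial_ne_zero) h

end Determinant

theorem LinearMap.det_eq_of_isAdjointPair {K V : Type*} [Field K] [AddCommGroup V] [Module K V]
    [FiniteDimensional K V] {B : LinearMap.BilinForm K V} (hB : B.Nondegenerate)
    {f g : Module.End K V} (h : LinearMap.IsAdjointPair B B f g) :
    LinearMap.det g = LinearMap.det f := by
  classical
  let b := Module.finBasis K V
  have hcompl : B.compl₁₂ f LinearMap.id = B.compl₁₂ LinearMap.id g := by
    ext x y; exact h x y
  have hmat := congrArg (fun B' => (LinearMap.toMatrix₂ b b B').det) hcompl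
  simp only [LinearMap.toMatrix₂_compl₁₂ b b b b, LinearMap.toMatrix_id, Matrix.det_mul,
    Matrix.det_transpose, Matrix.det_one, mul_one, one_mul] at hmat
  have hdet : (LinearMap.toMatrix₂ b b B).det ≠ 0 :=
    (LinearMap.BilinForm.nondegenerate_iff_det_ne_zero b).1 hB
  rw [← LinearMap.det_toMatrix b f, ← LinearMap.det_toMatrix b g]
  exact mul_left_cancel₀ hdet (hmat.symm.trans (mul_comm _ _))

theorem LinearMap.det_mul_self_eq_one_of_isAdjointPair {K V : Type*} [Field K] [AddCommGroup V]
    [Module K V] [FiniteDimensional K V] {B : LinearMap.BilinForm K V} (hB : B.Nondegenerate)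
    {f g : Module.End K V} (h : LinearMap.IsAdjointPair B B f g) (hfg : f ∘ₗ g = LinearMap.id) :
    LinearMap.det f * LinearMap.det f = 1 := by
  conv_lhs => arg 2; rw [← LinearMap.det_eq_of_isAdjointPair hB h]
  rw [← LinearMap.det_comp, hfg, LinearMap.det_id]

def IsCliffordMap {𝕜 Z R : Type*} [CommRing 𝕜] [AddCommGroup Z] [Module 𝕜 Z] [Ring R]
    [Algebra 𝕜 R] (B : LinearMap.BilinForm 𝕜 Z) (J : Z →ₗ[𝕜] R) : Prop :=
  ∀ a b, J a * J b + J b * J a = -(2 * B a b) • (1 : R)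

namespace IsCliffordMap

variable {𝕜 Z R : Type*} [Field 𝕜] [AddCommGroup Z] [Module 𝕜 Z] [Ring R] [Algebra 𝕜 R]
  {B : LinearMap.BilinForm 𝕜 Z} {J : Z →ₗ[𝕜] R}

theorem anticomm (hJ : IsCliffordMap B J) {a b : Z} (h : B a b = 0) :
    J a * J b = -(J b * J a) :=
  eq_neg_of_add_eq_zero_left (by rw [hJ, h, mul_zero, neg_zero, zero_smul])

theorem prod_ofFn_comp_eq_det_smul [CharZero 𝕜] (hJ : IsCliffordMap B J) {n : ℕ}
    {b : Module.Basis (Fin n) 𝕜 Z} (hb : B.iIsOrtho b) {f : Z →ₗ[𝕜] Z}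
    (hf : ∀ u v, B (f u) (f v) = B u v) :
    (List.ofFn fun i => J (f (b i))).prod =
      LinearMap.det f • (List.ofFn fun i => J (b i)).prod :=
  prod_ofFn_comp_eq_det_smul_of_anticomm J b f (fun _ _ hij => hJ.anticomm (hb hij))
    (fun _ _ hij => hJ.anticomm ((hf _ _).trans (hb hij)))

variable [NeZero (2 : 𝕜)]

theorem mul_self (hJ : IsCliffordMap B J) (a : Z) : J a * J a = -B a a • (1 : R) := by
  have h := hJ a a
  rw [← two_smul 𝕜, ← mul_neg, mul_smul] at h
  exact smul_right_injective R two_ne_zero h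

theorem isUnit (hJ : IsCliffordMap B J) {a : Z} (h : B a a ≠ 0) : IsUnit (J a) := by
  have hinv : J a * ((-B a a)⁻¹ • J a) = 1 := by
    rw [mul_smul_comm, hJ.mul_self, smul_smul, inv_mul_cancel₀ (neg_ne_zero.2 h), one_smul]
  exact ⟨⟨J a, _, hinv, by rwa [smul_mul_assoc, ← mul_smul_comm]⟩, rfl⟩

end IsCliffordMap

theorem eq_smul_one_of_mul_smul_one_eq_one {𝕜 R : Type*} [CommRing 𝕜] [Ring R] [Algebra 𝕜 R]
    {c : 𝕜} {k : R} (hc : c * c = 1) (h : k * (c • 1) = 1) : k = c • 1 := calc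
  k = k * ((c * c) • 1) := by rw [hc, one_smul, mul_one]
  _ = k * (c • 1) * (c • 1) := by rw [mul_assoc, smul_mul_smul, mul_one]
  _ = c • 1 := by rw [h, one_mul]

theorem nonneg_of_comp_adjoint_eq_smul_id {V W : Type*} [AddCommGroup V] [Module ℝ V]
    [AddCommGroup W] [Module ℝ W] [Nontrivial W] {BV : LinearMap.BilinForm ℝ V}
    {BW : LinearMap.BilinForm ℝ W} {A : V →ₗ[ℝ] W} {Aτ : W →ₗ[ℝ] V}
    (hAτ : ∀ x y, BW (A x) y = BV x (Aτ y)) (hV : ∀ x, x ≠ 0 → 0 < BV x x)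
    (hW : ∀ y, y ≠ 0 → 0 < BW y y) {c : ℝ} (h : A ∘ₗ Aτ = c • LinearMap.id) : 0 ≤ c := by
  obtain ⟨y, hy⟩ := exists_ne (0 : W)
  have hAτy : 0 ≤ BV (Aτ y) (Aτ y) := by
    rcases eq_or_ne (Aτ y) 0 with h0 | h0
    · simp [h0]
    · exact (hV _ h0).le
  have hcy : c * BW y y = BV (Aτ y) (Aτ y) := by
    have hAAτ : A (Aτ y) = c • y := LinearMap.congr_fun h y
    rw [← hAτ, hAAτ, map_smul, LinearMap.smul_apply, smul_eq_mul]
  exact nonneg_of_mul_nonneg_left (hcy ▸ hAτy) (hW y hy)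

theorem volume_form_isomorphism_det_general
    {Vp Vm Z : Type*}
    [AddCommGroup Vp] [Module ℝ Vp] [Nontrivial Vp]
    [AddCommGroup Vm] [Module ℝ Vm]
    [AddCommGroup Z] [Module ℝ Z] [FiniteDimensional ℝ Z]
    (r s n : ℕ) (hn : r + s = n) (hrs : (r : ℤ) - (s : ℤ) ≡ 3 [ZMOD 4])
    (BZ : LinearMap.BilinForm ℝ Z) (bz : Module.Basis (Fin n) ℝ Z)
    (hbz : ∀ i j, BZ (bz i) (bz j) =
      if i = j then (if (i : ℕ) < r then 1 else -1) else 0)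
    (Bp : LinearMap.BilinForm ℝ Vp)
    (Bm : LinearMap.BilinForm ℝ Vm)
    (J : Z →ₗ[ℝ] Module.End ℝ Vp)
    (hJCl : ∀ a b : Z, J a * J b + J b * J a = -(2 * BZ a b) • (1 : Module.End ℝ Vp))
    (J' : Z →ₗ[ℝ] Module.End ℝ Vm)
    (hJ'Cl : ∀ a b : Z, J' a * J' b + J' b * J' a = -(2 * BZ a b) • (1 : Module.End ℝ Vm))
    (hΩp : (List.ofFn fun i => J (bz i)).prod = (1 : Module.End ℝ Vp))
    (hΩm : (List.ofFn fun i => J' (bz i)).prod = -(1 : Module.End ℝ Vm))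
    (A : Vp →ₗ[ℝ] Vm) (hA : Function.Bijective A)
    (Aτ : Vm →ₗ[ℝ] Vp) (hAτ : ∀ (x : Vp) (y : Vm), Bm (A x) y = Bp x (Aτ y))
    (C : Z →ₗ[ℝ] Z) (Cτ : Z →ₗ[ℝ] Z)
    (hCτ : ∀ a b : Z, BZ (C a) b = BZ a (Cτ b))
    (hCCτ : C ∘ₗ Cτ = LinearMap.id)
    (hrel : ∀ z : Z, (Aτ ∘ₗ (J' z : Vm →ₗ[ℝ] Vm) ∘ₗ A : Vp →ₗ[ℝ] Vp) = J (Cτ z)) :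
    (A ∘ₗ Aτ : Vm →ₗ[ℝ] Vm) = -(LinearMap.det C) • LinearMap.id ∧
    (s = 0 → (∀ x : Vp, x ≠ 0 → 0 < Bp x x) → (∀ x : Vm, x ≠ 0 → 0 < Bm x x) →
      LinearMap.det C = -1 ∧ (A ∘ₗ Aτ : Vm →ₗ[ℝ] Vm) = LinearMap.id) := by
  have hJ : IsCliffordMap BZ J := hJCl
  have hJ' : IsCliffordMap BZ J' := hJ'Cl
  have hCτC : ∀ z, Cτ (C z) = z := LinearMap.congr_fun (mul_eq_one_comm.mp hCCτ)
  have hCiso (u v : Z) : BZ (C u) (C v) = BZ u v := by rw [hCτ, hCτC]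
  have hbz_ortho : BZ.iIsOrtho bz := fun i j hij => (hbz i j).trans (if_neg hij)
  have hbz_self (i : Fin n) : BZ (bz i) (bz i) ≠ 0 := by
    rw [hbz, if_pos rfl]; split_ifs <;> norm_num
  have hdet : LinearMap.det C * LinearMap.det C = 1 :=
    LinearMap.det_mul_self_eq_one_of_isAdjointPair
      ((LinearMap.BilinForm.iIsOrtho.nondegenerate_iff_not_isOrtho_basis_self BZ bz
        hbz_ortho).2 hbz_self) hCτ hCCτ
  have hodd : Odd n := by rw [Int.ModEq] at hrs; rw [Nat.odd_iff]; omega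
  set e := LinearEquiv.ofBijective A hA
  have hconj (z : Z) : A ∘ₗ Aτ * J' (C z) = e.conjAlgEquiv ℝ (J z) := by
    rw [show J z = Aτ ∘ₗ J' (C z) ∘ₗ A by rw [hrel, hCτC]]
    ext y
    simp [e, LinearEquiv.conjAlgEquiv_apply]
  have hKW : A ∘ₗ Aτ * (List.ofFn fun i => J' (C (bz i))).prod = 1 := by
    refine mul_prod_ofFn_eq_one_of_odd hodd _ _
      (fun i => hJ'.isUnit ((hCiso _ _).trans_ne (hbz_self i))) (fun i => ?_) ?_
    · rw [hconj, ← map_mul, hJ.mul_self, hJ'.mul_self, hCiso, map_smul, map_one]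
    · simp_rw [hconj]
      change (List.ofFn (e.conjAlgEquiv ℝ ∘ fun i => J (bz i))).prod = 1
      rw [← List.map_ofFn, ← map_list_prod, hΩp, map_one]
  rw [hJ'.prod_ofFn_comp_eq_det_smul hbz_ortho hCiso, hΩm, smul_neg, ← neg_smul] at hKW
  have hmain : A ∘ₗ Aτ = -LinearMap.det C • LinearMap.id :=
    eq_smul_one_of_mul_smul_one_eq_one (by rwa [neg_mul_neg]) hKW
  refine ⟨hmain, fun _ hBp hBm => ?_⟩
  have : Nontrivial Vm := hA.1.nontrivial
  have hdC : LinearMap.det C = -1 := by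
    nlinarith [nonneg_of_comp_adjoint_eq_smul_id hAτ hBp hBm hmain]
  rw [hmain, hdC, neg_neg, one_smul]
  exact ⟨rfl, rfl⟩

/-- Suppose `r - s ≡ 3 (mod 4)` and `Φ = A ⊕ C` is a Lie algebra isomorphism
`N_{r,s}(V₊) → N_{r,s}(V₋)` between the pseudo `H`-type algebras built on the two
non-equivalent irreducible minimal admissible modules (the volume form acting as `+Id` on
`V₊` and `-Id` on `V₋`), with `Aᵀ J̃_z A = J_{Cᵀ z}` and `C Cᵀ = Id`.  Then
`A Aᵀ = -(det C)·Id`; moreover if `s = 0` (so the scalar products are positive definite)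
then `det C = -1` and `A Aᵀ = Id`. -/
theorem volume_form_isomorphism_det
    {Vp Vm Z : Type*}
    [AddCommGroup Vp] [Module ℝ Vp] [FiniteDimensional ℝ Vp] [Nontrivial Vp]
    [AddCommGroup Vm] [Module ℝ Vm] [FiniteDimensional ℝ Vm]
    [AddCommGroup Z] [Module ℝ Z] [FiniteDimensional ℝ Z]
    (r s n : ℕ) (hn : r + s = n) (hrs : (r : ℤ) - (s : ℤ) ≡ 3 [ZMOD 4])
    (BZ : LinearMap.BilinForm ℝ Z) (bz : Module.Basis (Fin n) ℝ Z)
    (hbz : ∀ i j, BZ (bz i) (bz j) =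
      if i = j then (if (i : ℕ) < r then 1 else -1) else 0)
    (Bp : LinearMap.BilinForm ℝ Vp) (hBpnd : Bp.Nondegenerate)
    (hBpsymm : ∀ x y : Vp, Bp x y = Bp y x)
    (Bm : LinearMap.BilinForm ℝ Vm) (hBmnd : Bm.Nondegenerate)
    (hBmsymm : ∀ x y : Vm, Bm x y = Bm y x)
    (J : Z →ₗ[ℝ] Module.End ℝ Vp)
    (hJCl : ∀ a b : Z, J a * J b + J b * J a = -(2 * BZ a b) • (1 : Module.End ℝ Vp))
    (hJskew : ∀ (z : Z) (x y : Vp), Bp (J z x) y + Bp x (J z y) = 0)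
    (J' : Z →ₗ[ℝ] Module.End ℝ Vm)
    (hJ'Cl : ∀ a b : Z, J' a * J' b + J' b * J' a = -(2 * BZ a b) • (1 : Module.End ℝ Vm))
    (hJ'skew : ∀ (z : Z) (x y : Vm), Bm (J' z x) y + Bm x (J' z y) = 0)
    (hΩp : (List.ofFn fun i => J (bz i)).prod = (1 : Module.End ℝ Vp))
    (hΩm : (List.ofFn fun i => J' (bz i)).prod = -(1 : Module.End ℝ Vm))
    (A : Vp →ₗ[ℝ] Vm) (hA : Function.Bijective A)
    (Aτ : Vm →ₗ[ℝ] Vp) (hAτ : ∀ (x : Vp) (y : Vm), Bm (A x) y = Bp x (Aτ y))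
    (C : Z →ₗ[ℝ] Z) (Cτ : Z →ₗ[ℝ] Z)
    (hCτ : ∀ a b : Z, BZ (C a) b = BZ a (Cτ b))
    (hCCτ : C ∘ₗ Cτ = LinearMap.id)
    (hrel : ∀ z : Z, (Aτ ∘ₗ (J' z : Vm →ₗ[ℝ] Vm) ∘ₗ A : Vp →ₗ[ℝ] Vp) = J (Cτ z)) :
    (A ∘ₗ Aτ : Vm →ₗ[ℝ] Vm) = -(LinearMap.det C) • LinearMap.id ∧
    (s = 0 → (∀ x : Vp, x ≠ 0 → 0 < Bp x x) → (∀ x : Vm, x ≠ 0 → 0 < Bm x x) →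
      LinearMap.det C = -1 ∧ (A ∘ₗ Aτ : Vm →ₗ[ℝ] Vm) = LinearMap.id) :=
  volume_form_isomorphism_det_general r s n hn hrs BZ bz hbz Bp Bm J hJCl J' hJ'Cl hΩp hΩm A hA Aτ
    hAτ C Cτ hCτ hCCτ hrel
end

section
/- There exists a Lie algebra automorphism Ψ = A ⊕ C of N_{1,1} (the pseudo H-type algebra on the minimal admissible module V^{1,1} ≅ ℝ^{2,2} of Cl_{1,1}) with C(z_1) = z_2, C(z_2) = z_1, satisfying C C^τ = −Id, where z_1 is the positive and z_2 the negative orthonormal generator; explicitly, in the basis {v, J_{z_1}v, J_{z_2}v, J_{z_1}J_{z_2}v}, the map A swapping J_{z_1}v ↔ J_{z_2}v and fixing v and J_{z_1}J_{z_2}v, together with C as above, satisfies A J_{z_i} A^τ = J_{C(z_i)} for i = 1, 2. -/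
/-- Existence of the automorphism `Ψ = A ⊕ C` of `N_{1,1}` with
`C C^τ = -Id`.  With `V^{1,1} ≅ ℝ^{2,2}` having orthonormal basis
`{v, J₁ v, J₂ v, J₁ J₂ v}` (the first two positive, the last two negative) and center
`ℝ^{1,1}` with orthonormal basis `z₁` (positive), `z₂` (negative), the map `C` swapping
`z₁ ↔ z₂` satisfies `C Cᵀ = -Id`, and the map `A` fixing `v`, `J₁ J₂ v` and swapping
`J₁ v ↔ J₂ v` satisfies `A J₁ Aᵀ = J₂ = J_{C z₁}` and `A J₂ Aᵀ = J₁ = J_{C z₂}`. -/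
theorem N11_automorphism
    {V Z : Type*}
    [AddCommGroup V] [Module ℝ V] [FiniteDimensional ℝ V]
    [AddCommGroup Z] [Module ℝ Z] [FiniteDimensional ℝ Z]
    (BV : LinearMap.BilinForm ℝ V) (hBVnd : BV.Nondegenerate)
    (hBVsymm : ∀ x y : V, BV x y = BV y x)
    (J₁ J₂ : Module.End ℝ V)
    (hJ₁ : J₁ * J₁ = -1) (hJ₂ : J₂ * J₂ = 1) (hJJ : J₁ * J₂ = -(J₂ * J₁))
    (hsk₁ : ∀ x y : V, BV (J₁ x) y + BV x (J₁ y) = 0)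
    (hsk₂ : ∀ x y : V, BV (J₂ x) y + BV x (J₂ y) = 0)
    (v : V) (bV : Module.Basis (Fin 4) ℝ V)
    (hb0 : bV 0 = v) (hb1 : bV 1 = J₁ v) (hb2 : bV 2 = J₂ v) (hb3 : bV 3 = J₁ (J₂ v))
    (hn0 : BV v v = 1) (hn1 : BV (J₁ v) (J₁ v) = 1)
    (hn2 : BV (J₂ v) (J₂ v) = -1) (hn3 : BV (J₁ (J₂ v)) (J₁ (J₂ v)) = -1)
    (horth : ∀ i j : Fin 4, i ≠ j → BV (bV i) (bV j) = 0)
    (BZ : LinearMap.BilinForm ℝ Z) (hBZnd : BZ.Nondegenerate)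
    (hBZsymm : ∀ a b : Z, BZ a b = BZ b a)
    (z₁ z₂ : Z) (bZ : Module.Basis (Fin 2) ℝ Z) (hz1 : bZ 0 = z₁) (hz2 : bZ 1 = z₂)
    (hZ11 : BZ z₁ z₁ = 1) (hZ22 : BZ z₂ z₂ = -1) (hZ12 : BZ z₁ z₂ = 0)
    (C : Z →ₗ[ℝ] Z) (hC1 : C z₁ = z₂) (hC2 : C z₂ = z₁)
    (Cτ : Z →ₗ[ℝ] Z) (hCτ : ∀ a b : Z, BZ (C a) b = BZ a (Cτ b))
    (A : V →ₗ[ℝ] V) (hA0 : A v = v) (hA1 : A (J₁ v) = J₂ v)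
    (hA2 : A (J₂ v) = J₁ v) (hA3 : A (J₁ (J₂ v)) = J₁ (J₂ v))
    (Aτ : V →ₗ[ℝ] V) (hAτ : ∀ x y : V, BV (A x) y = BV x (Aτ y)) :
    C ∘ₗ Cτ = -LinearMap.id ∧
    (A ∘ₗ (J₁ : V →ₗ[ℝ] V) ∘ₗ Aτ : V →ₗ[ℝ] V) = J₂ ∧
    (A ∘ₗ (J₂ : V →ₗ[ℝ] V) ∘ₗ Aτ : V →ₗ[ℝ] V) = J₁ := by

  -- uniqueness from nondegeneracy
  have uniqV : ∀ x y : V, (∀ i : Fin 4, BV (bV i) x = BV (bV i) y) → x = y := by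
    intro x y h
    have hz : BV (x - y) = 0 := by
      apply bV.ext
      intro i
      rw [hBVsymm]
      simp [map_sub, h i]
    have := hBVnd.1 (x - y) (fun n => by rw [hz]; rfl)
    exact sub_eq_zero.mp this
  have uniqZ : ∀ x y : Z, (∀ i : Fin 2, BZ (bZ i) x = BZ (bZ i) y) → x = y := by
    intro x y h
    have hz : BZ (x - y) = 0 := by
      apply bZ.ext
      intro i
      rw [hBZsymm]
      simp [map_sub, h i]
    have := hBZnd.1 (x - y) (fun n => by rw [hz]; rfl)
    exact sub_eq_zero.mp this
  -- orthogonality table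
  have e01 : BV v (J₁ v) = 0 := by simpa [hb0, hb1] using horth 0 1 (by decide)
  have e02 : BV v (J₂ v) = 0 := by simpa [hb0, hb2] using horth 0 2 (by decide)
  have e03 : BV v (J₁ (J₂ v)) = 0 := by simpa [hb0, hb3] using horth 0 3 (by decide)
  have e10 : BV (J₁ v) v = 0 := by simpa [hb0, hb1] using horth 1 0 (by decide)
  have e12 : BV (J₁ v) (J₂ v) = 0 := by simpa [hb1, hb2] using horth 1 2 (by decide)
  have e13 : BV (J₁ v) (J₁ (J₂ v)) = 0 := by simpa [hb1, hb3] using horth 1 3 (by decide)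
  have e20 : BV (J₂ v) v = 0 := by simpa [hb0, hb2] using horth 2 0 (by decide)
  have e21 : BV (J₂ v) (J₁ v) = 0 := by simpa [hb1, hb2] using horth 2 1 (by decide)
  have e23 : BV (J₂ v) (J₁ (J₂ v)) = 0 := by simpa [hb2, hb3] using horth 2 3 (by decide)
  have e30 : BV (J₁ (J₂ v)) v = 0 := by simpa [hb0, hb3] using horth 3 0 (by decide)
  have e31 : BV (J₁ (J₂ v)) (J₁ v) = 0 := by simpa [hb1, hb3] using horth 3 1 (by decide)
  have e32 : BV (J₁ (J₂ v)) (J₂ v) = 0 := by simpa [hb2, hb3] using horth 3 2 (by decide)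
  -- algebraic relations for J₁, J₂
  have k1 : ∀ x : V, J₁ (J₁ x) = -x := fun x => by
    have := LinearMap.ext_iff.mp hJ₁ x
    simpa using this
  have k2 : ∀ x : V, J₂ (J₂ x) = x := fun x => by
    have := LinearMap.ext_iff.mp hJ₂ x
    simpa using this
  have k12 : ∀ x : V, J₁ (J₂ x) = -(J₂ (J₁ x)) := fun x => by
    have := LinearMap.ext_iff.mp hJJ x
    simpa using this
  have k21 : ∀ x : V, J₂ (J₁ x) = -(J₁ (J₂ x)) := fun x => by
    rw [k12 x, neg_neg]
  -- values of Aτ on the basis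
  have hAτ0 : Aτ v = v := by
    apply uniqV
    intro i
    rw [← hAτ]
    fin_cases i <;>
      simp [hb0, hb1, hb2, hb3, hA0, hA1, hA2, hA3, e01, e02, e03, e10, e12, e13,
        e20, e21, e23, e30, e31, e32, hn0, hn1, hn2, hn3]
  have hAτ1 : Aτ (J₁ v) = -(J₂ v) := by
    apply uniqV
    intro i
    rw [← hAτ]
    fin_cases i <;>
      simp [hb0, hb1, hb2, hb3, hA0, hA1, hA2, hA3, e01, e02, e03, e10, e12, e13,
        e20, e21, e23, e30, e31, e32, hn0, hn1, hn2, hn3]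
  have hAτ2 : Aτ (J₂ v) = -(J₁ v) := by
    apply uniqV
    intro i
    rw [← hAτ]
    fin_cases i <;>
      simp [hb0, hb1, hb2, hb3, hA0, hA1, hA2, hA3, e01, e02, e03, e10, e12, e13,
        e20, e21, e23, e30, e31, e32, hn0, hn1, hn2, hn3]
  have hAτ3 : Aτ (J₁ (J₂ v)) = J₁ (J₂ v) := by
    apply uniqV
    intro i
    rw [← hAτ]
    fin_cases i <;>
      simp [hb0, hb1, hb2, hb3, hA0, hA1, hA2, hA3, e01, e02, e03, e10, e12, e13,
        e20, e21, e23, e30, e31, e32, hn0, hn1, hn2, hn3]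
  -- values of Cτ on the basis
  have hzZ21 : BZ z₂ z₁ = 0 := by rw [hBZsymm]; exact hZ12
  have hCτ1 : Cτ z₁ = -z₂ := by
    apply uniqZ
    intro i
    rw [← hCτ]
    fin_cases i <;> simp [hz1, hz2, hC1, hC2, hZ11, hZ22, hZ12, hzZ21]
  have hCτ2 : Cτ z₂ = -z₁ := by
    apply uniqZ
    intro i
    rw [← hCτ]
    fin_cases i <;> simp [hz1, hz2, hC1, hC2, hZ11, hZ22, hZ12, hzZ21]
  refine ⟨?_, ?_, ?_⟩
  · apply bZ.ext
    intro i
    fin_cases i <;>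
      simp [hz1, hz2, hCτ1, hCτ2, hC1, hC2]
  · apply bV.ext
    intro i
    fin_cases i
    · simp [LinearMap.coe_comp, Function.comp_apply, hb0, hAτ0, hA1]
    · simp [LinearMap.coe_comp, Function.comp_apply, hb1, hAτ1, map_neg, hA3, k21, neg_neg]
    · simp [LinearMap.coe_comp, Function.comp_apply, hb2, hAτ2, map_neg, k1, neg_neg,
        hA0, k2]
    · simp [LinearMap.coe_comp, Function.comp_apply, hb3, hAτ3, k1, map_neg, hA2, k21, k2]
  · apply bV.ext
    intro i
    fin_cases i
    · simp [LinearMap.coe_comp, Function.comp_apply, hb0, hAτ0, hA2]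
    · simp [LinearMap.coe_comp, Function.comp_apply, hb1, hAτ1, map_neg, k2, hA0, k1]
    · simp [LinearMap.coe_comp, Function.comp_apply, hb2, hAτ2, map_neg, k21, neg_neg, hA3]
    · simp [LinearMap.coe_comp, Function.comp_apply, hb3, hAτ3, k21, k2, map_neg, hA1, k1]
end
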